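/- For |q| < 1 and complex a with a^2 q^k ≠ 1 for all k ≥ 0, one has ∑_{n≥0} (-1)^n a^n q^{binom(n,2)} (a;q)_n / ((a^2;q)_n (q;q)_n) = (a;q)_∞ / (a^2;q)_∞. -/

import Mathlib

/-!
Write `S(b)` for the series with `a` replaced by `b`, and `tₙ(b)` for its terms. Since
`(1 - b) tₙ(bq)` is `tₙ(b)` times an explicit rational function of `qⁿ`, the combination
`(1 - b²)(1 - b²q) tₙ(b) - (1 - b) tₙ(bq)` telescopes, which gives the functional equation
`(1 - b²)(1 - b²q) S(b) = (1 - b) S(bq)`. Iterating, `(a²;q)_{2N} S(a) = (a;q)_N S(aqᴺ)`.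
The terms of `S(aqᴺ)` are bounded by `K ‖aqᴺ‖ⁿ` uniformly in `N`, so by Tannery's theorem
`S(aqᴺ) → S(0) = 1`, and letting `N → ∞` gives the identity.
-/

open Finset Filter Topology

noncomputable def qPoch (a q : ℂ) (n : ℕ) : ℂ := ∏ k ∈ Finset.range n, (1 - a * q ^ k)

noncomputable def qPochInf (a q : ℂ) : ℂ := ∏' k : ℕ, (1 - a * q ^ k)

theorem Summable.tsum_eq_of_telescoping {G : Type*} [AddCommGroup G] [TopologicalSpace G]
    [IsTopologicalAddGroup G] [T2Space G] {f w : ℕ → G}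
    (hf : Summable f) (hfw : ∀ n, f n = w n - w (n + 1)) (hw : Tendsto w atTop (𝓝 0)) :
    ∑' n, f n = w 0 := by
  refine (hf.hasSum_iff_tendsto_nat.mpr ?_).tsum_eq
  simp_rw [hfw, sum_range_sub']
  simpa using hw.const_sub (w 0)

section Algebra

variable (c q : ℂ)

@[simp]
theorem qPoch_zero : qPoch c q 0 = 1 := prod_range_zero _

theorem qPoch_succ (n : ℕ) : qPoch c q (n + 1) = qPoch c q n * (1 - c * q ^ n) :=
  prod_range_succ _ _

theorem qPoch_add (m n : ℕ) : qPoch c q (m + n) = qPoch c q m * qPoch (c * q ^ m) q n := by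
  rw [qPoch, prod_range_add]
  congr 1
  exact prod_congr rfl fun k _ => by rw [pow_add, mul_assoc]

theorem qPoch_succ' (n : ℕ) : qPoch c q (n + 1) = (1 - c) * qPoch (c * q) q n := by
  rw [add_comm, qPoch_add]
  simp [qPoch]

variable {c q}

theorem qPoch_ne_zero (hc : ∀ k : ℕ, c * q ^ k ≠ 1) (n : ℕ) : qPoch c q n ≠ 0 :=
  prod_ne_zero_iff.mpr fun k _ => sub_ne_zero.mpr (hc k).symm

theorem mul_pow_sq_mul_pow_ne_one (hc : ∀ k : ℕ, c ^ 2 * q ^ k ≠ 1) (m : ℕ) :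
    ∀ k : ℕ, (c * q ^ m) ^ 2 * q ^ k ≠ 1 := fun k => by
  rw [show (c * q ^ m) ^ 2 * q ^ k = c ^ 2 * q ^ (2 * m + k) by ring]
  exact hc _

end Algebra

section Convergence

variable {q : ℂ} (hq : ‖q‖ < 1)
include hq

theorem mul_pow_ne_one_of_norm_lt_one (k : ℕ) : q * q ^ k ≠ 1 := fun h => by
  have := congrArg norm h
  rw [← pow_succ', norm_pow, norm_one] at this
  exact (pow_lt_one₀ (norm_nonneg q) hq k.succ_ne_zero).ne this

theorem hasSum_norm_mul_pow (c : ℂ) :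
    HasSum (fun k : ℕ => ‖c * q ^ k‖) (‖c‖ / (1 - ‖q‖)) := by
  simpa [norm_mul, norm_pow, div_eq_mul_inv] using
    (hasSum_geometric_of_lt_one (norm_nonneg q) hq).mul_left ‖c‖

theorem hasProd_qPochInf (c : ℂ) : HasProd (fun k : ℕ => 1 - c * q ^ k) (qPochInf c q) := by
  have := multipliable_one_add_of_summable (f := fun k : ℕ => -(c * q ^ k))
    (by simpa only [norm_neg] using (hasSum_norm_mul_pow hq c).summable)
  simp only [← sub_eq_add_neg] at this
  exact this.hasProd

theorem tendsto_qPoch (c : ℂ) : Tendsto (qPoch c q) atTop (𝓝 (qPochInf c q)) :=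
  (hasProd_qPochInf hq c).tendsto_prod_nat

theorem qPochInf_ne_zero {c : ℂ} (hc : ∀ k : ℕ, c * q ^ k ≠ 1) : qPochInf c q ≠ 0 := by
  simpa only [qPochInf, sub_eq_add_neg] using
    tprod_one_add_ne_zero_of_summable (f := fun k : ℕ => -(c * q ^ k))
      (fun k => by simpa only [← sub_eq_add_neg] using sub_ne_zero.mpr (hc k).symm)
      (by simpa only [norm_neg] using (hasSum_norm_mul_pow hq c).summable)

theorem norm_qPoch_le (c : ℂ) (n : ℕ) : ‖qPoch c q n‖ ≤ Real.exp (‖c‖ / (1 - ‖q‖)) :=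
  calc ‖qPoch c q n‖ = ∏ k ∈ range n, ‖1 - c * q ^ k‖ := norm_prod _ _
    _ ≤ ∏ k ∈ range n, (1 + ‖c * q ^ k‖) :=
        prod_le_prod (fun _ _ => norm_nonneg _) fun _ _ =>
          (norm_sub_le _ _).trans_eq (by rw [norm_one])
    _ ≤ Real.exp (∑ k ∈ range n, ‖c * q ^ k‖) :=
        Real.prod_one_add_le_exp_sum _ fun _ => norm_nonneg _
    _ ≤ Real.exp (‖c‖ / (1 - ‖q‖)) :=
        Real.exp_le_exp.mpr (sum_le_hasSum _ (fun _ _ => norm_nonneg _) (hasSum_norm_mul_pow hq c))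

theorem exists_pos_le_norm_qPoch_mul_pow {c : ℂ} (hc : ∀ k : ℕ, c * q ^ k ≠ 1) :
    ∃ δ > 0, ∀ m n, δ ≤ ‖qPoch (c * q ^ m) q n‖ := by
  obtain ⟨M, hM⟩ := ((tendsto_qPoch hq c).inv₀ (qPochInf_ne_zero hq hc)).norm.bddAbove_range
  have hpos (n : ℕ) : 0 < ‖qPoch c q n‖ := norm_pos_iff.mpr (qPoch_ne_zero hc n)
  have hinv (n : ℕ) : ‖qPoch c q n‖⁻¹ ≤ M := by simpa using hM (Set.mem_range_self n)
  have hM0 : 0 < M := (inv_pos.mpr (hpos 0)).trans_le (hinv 0)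
  set D := Real.exp (‖c‖ / (1 - ‖q‖))
  refine ⟨M⁻¹ / D, by positivity, fun m n => ?_⟩
  rw [div_le_iff₀ (Real.exp_pos _)]
  calc M⁻¹ ≤ ‖qPoch c q (m + n)‖ := (inv_le_comm₀ hM0 (hpos _)).mpr (hinv _)
    _ = ‖qPoch (c * q ^ m) q n‖ * ‖qPoch c q m‖ := by rw [qPoch_add, norm_mul, mul_comm]
    _ ≤ ‖qPoch (c * q ^ m) q n‖ * D := by gcongr; exact norm_qPoch_le hq c m

end Convergence

noncomputable def heineTerm (q b : ℂ) (n : ℕ) : ℂ :=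
  (-1) ^ n * b ^ n * q ^ n.choose 2 * qPoch b q n / (qPoch (b ^ 2) q n * qPoch q q n)

@[simp]
theorem heineTerm_zero (q b : ℂ) : heineTerm q b 0 = 1 := by
  simp [heineTerm]

section Term

variable {q b : ℂ} (hq : ‖q‖ < 1) (hb : ∀ k : ℕ, b ^ 2 * q ^ k ≠ 1)
include hq hb

theorem heineTerm_succ (n : ℕ) :
    heineTerm q b (n + 1) = heineTerm q b n *
      (-(b * q ^ n) * (1 - b * q ^ n) / ((1 - b ^ 2 * q ^ n) * (1 - q * q ^ n))) := by
  have := sub_ne_zero.mpr (hb n).symm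
  have := sub_ne_zero.mpr (mul_pow_ne_one_of_norm_lt_one hq n).symm
  have := qPoch_ne_zero hb n
  have := qPoch_ne_zero (mul_pow_ne_one_of_norm_lt_one hq) n
  rw [heineTerm, heineTerm, qPoch_succ, qPoch_succ, qPoch_succ, Nat.choose_succ_succ,
    Nat.choose_one_right, pow_add]
  field_simp
  ring

theorem summable_heineTerm : Summable (heineTerm q b) := by
  have hratio : Tendsto (fun n : ℕ => -(b * q ^ n) * (1 - b * q ^ n) /
      ((1 - b ^ 2 * q ^ n) * (1 - q * q ^ n))) atTop (𝓝 0) := by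
    have hcont : ContinuousAt (fun x : ℂ => -(b * x) * (1 - b * x) /
        ((1 - b ^ 2 * x) * (1 - q * x))) 0 :=
      ContinuousAt.div (by fun_prop) (by fun_prop) (by simp)
    simpa [Function.comp_def] using
      hcont.tendsto.comp (tendsto_pow_atTop_nhds_zero_of_norm_lt_one hq)
  refine summable_of_ratio_norm_eventually_le one_half_lt_one ?_
  filter_upwards [(tendsto_zero_iff_norm_tendsto_zero.mp hratio).eventually
    (eventually_le_nhds one_half_pos)] with n hn
  rw [heineTerm_succ hq hb, norm_mul, mul_comm]
  gcongr

/-- Both `(b;q)_{n+1}` and `(b²;q)_{n+2}` can be split off at either end. -/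
theorem one_sub_mul_heineTerm_mul (n : ℕ) :
    (1 - b) * heineTerm q (b * q) n = (1 - b ^ 2) * (1 - b ^ 2 * q) * heineTerm q b n *
      (q ^ n * (1 - b * q ^ n) / ((1 - b ^ 2 * q ^ n) * (1 - b ^ 2 * q ^ (n + 1)))) := by
  have e1 : (1 - b) * qPoch (b * q) q n = qPoch b q n * (1 - b * q ^ n) := by
    rw [← qPoch_succ', qPoch_succ]
  have e2 : (1 - b ^ 2) * (1 - b ^ 2 * q) * qPoch (b ^ 2 * q ^ 2) q n =
      qPoch (b ^ 2) q n * ((1 - b ^ 2 * q ^ n) * (1 - b ^ 2 * q ^ (n + 1))) := by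
    calc (1 - b ^ 2) * (1 - b ^ 2 * q) * qPoch (b ^ 2 * q ^ 2) q n = qPoch (b ^ 2) q (n + 2) := by
          rw [qPoch_succ', qPoch_succ', sq q, mul_assoc, mul_assoc]
      _ = _ := by rw [qPoch_succ, qPoch_succ, mul_assoc]
  have := sub_ne_zero.mpr (hb n).symm
  have := sub_ne_zero.mpr (hb (n + 1)).symm
  have := qPoch_ne_zero hb n
  have := qPoch_ne_zero (mul_pow_ne_one_of_norm_lt_one hq) n
  have : qPoch (b ^ 2 * q ^ 2) q n ≠ 0 := by
    simpa [mul_pow] using qPoch_ne_zero (mul_pow_sq_mul_pow_ne_one hb 1) n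
  rw [heineTerm, heineTerm, mul_pow, mul_pow]
  field_simp
  linear_combination (b ^ n * q ^ n * q ^ n.choose 2 * qPoch (b ^ 2) q n * (1 - b ^ 2 * q ^ n) *
      (1 - b ^ 2 * q ^ (n + 1))) * e1 -
    (b ^ n * q ^ n * q ^ n.choose 2 * qPoch b q n * (1 - b * q ^ n)) * e2

end Term

noncomputable def heineTelescopingTerm (q b : ℂ) (n : ℕ) : ℂ :=
  heineTerm q b n * ((1 - q ^ n) * (1 - (b + b ^ 2) * q ^ n) / (1 - b ^ 2 * q ^ n))

section FunctionalEquation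

variable {q b : ℂ} (hq : ‖q‖ < 1) (hb : ∀ k : ℕ, b ^ 2 * q ^ k ≠ 1)
include hq hb

theorem heineTerm_sub_heineTerm_mul (n : ℕ) :
    (1 - b ^ 2) * (1 - b ^ 2 * q) * heineTerm q b n - (1 - b) * heineTerm q (b * q) n =
      (1 - b ^ 2) * (1 - b ^ 2 * q) * heineTelescopingTerm q b n -
        (1 - b ^ 2) * (1 - b ^ 2 * q) * heineTelescopingTerm q b (n + 1) := by
  have h1 := sub_ne_zero.mpr (hb n).symm
  have h2 : 1 - b ^ 2 * q * q ^ n ≠ 0 := by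
    rw [mul_assoc, ← pow_succ']; exact sub_ne_zero.mpr (hb (n + 1)).symm
  have h3 := sub_ne_zero.mpr (mul_pow_ne_one_of_norm_lt_one hq n).symm
  rw [one_sub_mul_heineTerm_mul hq hb, heineTelescopingTerm, heineTelescopingTerm,
    heineTerm_succ hq hb, pow_succ' q n]
  generalize heineTerm q b n = t, q ^ n = x at *
  field_simp
  ring

theorem tendsto_heineTelescopingTerm : Tendsto (heineTelescopingTerm q b) atTop (𝓝 0) := by
  have hcont : ContinuousAt (fun x : ℂ => (1 - x) * (1 - (b + b ^ 2) * x) / (1 - b ^ 2 * x)) 0 :=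
    ContinuousAt.div (by fun_prop) (by fun_prop) (by simp)
  have := (summable_heineTerm hq hb).tendsto_atTop_zero.mul
    (hcont.tendsto.comp (tendsto_pow_atTop_nhds_zero_of_norm_lt_one hq))
  rwa [zero_mul] at this

theorem heineTerm_functional_equation :
    (1 - b ^ 2) * (1 - b ^ 2 * q) * ∑' n, heineTerm q b n =
      (1 - b) * ∑' n, heineTerm q (b * q) n := by
  set c := (1 - b ^ 2) * (1 - b ^ 2 * q)
  have hT := (summable_heineTerm hq hb).mul_left c
  have hTq := (summable_heineTerm hq (by simpa using mul_pow_sq_mul_pow_ne_one hb 1)).mul_left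
    (1 - b)
  have htel := (hT.sub hTq).tsum_eq_of_telescoping (heineTerm_sub_heineTerm_mul hq hb)
    (by simpa using (tendsto_heineTelescopingTerm hq hb).const_mul c)
  rwa [heineTelescopingTerm, pow_zero, sub_self, zero_mul, zero_div, mul_zero, mul_zero,
    hT.tsum_sub hTq, tsum_mul_left, tsum_mul_left, sub_eq_zero] at htel

end FunctionalEquation

section Limit

variable {q a : ℂ} (hq : ‖q‖ < 1) (ha : ∀ k : ℕ, a ^ 2 * q ^ k ≠ 1)
include hq ha

theorem qPoch_sq_mul_tsum_heineTerm (N : ℕ) :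
    qPoch (a ^ 2) q (2 * N) * ∑' n, heineTerm q a n =
      qPoch a q N * ∑' n, heineTerm q (a * q ^ N) n := by
  induction N with
  | zero => simp
  | succ N ih =>
    have hfe := heineTerm_functional_equation hq (mul_pow_sq_mul_pow_ne_one ha N)
    rw [mul_assoc a, ← pow_succ] at hfe
    rw [Nat.mul_succ, qPoch_succ, qPoch_succ, qPoch_succ]
    linear_combination
      (1 - a ^ 2 * q ^ (2 * N)) * (1 - a ^ 2 * q ^ (2 * N + 1)) * ih + qPoch a q N * hfe

theorem exists_norm_heineTerm_mul_pow_le :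
    ∃ K ≥ 0, ∀ N n, ‖heineTerm q (a * q ^ N) n‖ ≤ K * ‖a * q ^ N‖ ^ n := by
  obtain ⟨δ₁, hδ₁, hden₁⟩ := exists_pos_le_norm_qPoch_mul_pow hq ha
  obtain ⟨δ₂, hδ₂, hden₂⟩ := exists_pos_le_norm_qPoch_mul_pow hq (mul_pow_ne_one_of_norm_lt_one hq)
  set E := Real.exp (‖a‖ / (1 - ‖q‖))
  refine ⟨E / (δ₁ * δ₂), by positivity, fun N n => ?_⟩
  set b := a * q ^ N
  have hb_le : ‖b‖ ≤ ‖a‖ := by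
    rw [norm_mul, norm_pow]
    exact mul_le_of_le_one_right (norm_nonneg a) (pow_le_one₀ (norm_nonneg q) hq.le)
  have hnum : ‖(-1) ^ n * b ^ n * q ^ n.choose 2 * qPoch b q n‖ ≤ ‖b‖ ^ n * E := by
    simp only [norm_mul, norm_pow, norm_neg, norm_one, one_pow, one_mul]
    have hpow : ‖q‖ ^ n.choose 2 ≤ 1 := pow_le_one₀ (norm_nonneg q) hq.le
    have hpoch : ‖qPoch b q n‖ ≤ E := (norm_qPoch_le hq b n).trans (by unfold E; gcongr)
    calc ‖b‖ ^ n * ‖q‖ ^ n.choose 2 * ‖qPoch b q n‖ ≤ ‖b‖ ^ n * 1 * E := by gcongr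
      _ = ‖b‖ ^ n * E := by rw [mul_one]
  have hden : δ₁ * δ₂ ≤ ‖qPoch (b ^ 2) q n * qPoch q q n‖ := by
    rw [norm_mul, mul_pow, ← pow_mul, mul_comm N]
    exact mul_le_mul (hden₁ _ n) (by simpa using hden₂ 0 n) hδ₂.le (norm_nonneg _)
  rw [heineTerm, norm_div, div_le_iff₀ ((mul_pos hδ₁ hδ₂).trans_le hden)]
  calc _ ≤ ‖b‖ ^ n * E := hnum
    _ = E / (δ₁ * δ₂) * ‖b‖ ^ n * (δ₁ * δ₂) := by field_simp
    _ ≤ _ := by gcongr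

/-- Tannery's theorem: the terms of `∑ₙ tₙ(aqᴺ)` tend to those of `∑ₙ 0ⁿ = 1`, with the summable
majorant `K 2⁻ⁿ` once `‖aqᴺ‖ ≤ 1/2`. -/
theorem tendsto_tsum_heineTerm_mul_pow :
    Tendsto (fun N => ∑' n, heineTerm q (a * q ^ N) n) atTop (𝓝 1) := by
  obtain ⟨K, hK, hbound⟩ := exists_norm_heineTerm_mul_pow_le hq ha
  have hb : Tendsto (fun N => ‖a * q ^ N‖) atTop (𝓝 0) := by
    simpa using ((tendsto_pow_atTop_nhds_zero_of_norm_lt_one hq).const_mul a).norm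
  have hterm (n : ℕ) : Tendsto (fun N => heineTerm q (a * q ^ N) n) atTop (𝓝 (0 ^ n)) := by
    rcases n with _ | n
    · simp
    · rw [zero_pow n.succ_ne_zero]
      exact squeeze_zero_norm (fun N => hbound N (n + 1))
        (by simpa using (hb.pow (n + 1)).const_mul K)
  have hdom : ∀ᶠ N in atTop, ∀ n, ‖heineTerm q (a * q ^ N) n‖ ≤ K * (1 / 2) ^ n := by
    filter_upwards [hb.eventually (eventually_le_nhds one_half_pos)] with N hN n
    exact (hbound N n).trans (by gcongr)
  simpa [tsum_geometric_of_norm_lt_one] using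
    tendsto_tsum_of_dominated_convergence (summable_geometric_two.mul_left K) hterm hdom

end Limit

theorem stmt9 (q a : ℂ) (hq : ‖q‖ < 1)
    (ha : ∀ k : ℕ, a ^ 2 * q ^ k ≠ 1) :
    ∑' n : ℕ, ((-1 : ℂ) ^ n * a ^ n * q ^ n.choose 2 * qPoch a q n
      / (qPoch (a ^ 2) q n * qPoch q q n))
    = qPochInf a q / qPochInf (a ^ 2) q := by
  change ∑' n, heineTerm q a n = _
  have hleft := ((tendsto_qPoch hq (a ^ 2)).comp (tendsto_id.const_mul_atTop' two_pos)).mul_const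
    (∑' n, heineTerm q a n)
  have hright := (tendsto_qPoch hq a).mul (tendsto_tsum_heineTerm_mul_pow hq ha)
  rw [mul_one] at hright
  have hlim := tendsto_nhds_unique (hleft.congr (qPoch_sq_mul_tsum_heineTerm hq ha)) hright
  rw [eq_div_iff (qPochInf_ne_zero hq ha), mul_comm, hlim]
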